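/- Let q ≥ 3 and n ≥ 3, and let w ∈ B_q(n). Then every nonempty prefix u of w satisfies |u|_0 < |u|_1. -/

import Mathlib

/-- Value of a letter: 1 ↦ +1, 0 ↦ -1, other letters ↦ 0. -/
def mval (a : ℕ) : ℤ := if a = 1 then 1 else if a = 0 then -1 else 0

/-- Value-sum of a word. -/
def vsum (w : List ℕ) : ℤ := (w.map mval).sum

/-- A (q-2)-colored Motzkin word over the alphabet Z_q = {0,...,q-1}:
all letters < q, every prefix has nonnegative value-sum, total value-sum 0. -/
def IsMotzkinWord (q : ℕ) (w : List ℕ) : Prop :=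
  (∀ a ∈ w, a < q) ∧ (∀ u, u <+: w → 0 ≤ vsum u) ∧ vsum w = 0

/-- The set 𝓜_{q-2}(n) of (q-2)-colored Motzkin words of length n. -/
def MotzkinSet (q n : ℕ) : Set (List ℕ) := {w | w.length = n ∧ IsMotzkinWord q w}

/-- M_{q-2}(n), the number of (q-2)-colored Motzkin words of length n. -/
noncomputable def Mnum (q n : ℕ) : ℕ := (MotzkinSet q n).ncard

/-- The set Ê_{q-2}(n) of elevated (q-2)-colored Motzkin words of length n:
words 1α0 with α ∈ 𝓜_{q-2}(n-2). -/
def ElevatedSet (q n : ℕ) : Set (List ℕ) :=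
  {w | w.length = n ∧ ∃ α ∈ MotzkinSet q (n - 2), w = 1 :: (α ++ [0])}

/-- The set A_q(n). -/
def SetA (q n : ℕ) : Set (List ℕ) :=
  {w | ∃ i ≤ n / 2, ∃ α ∈ MotzkinSet q i, ∃ β ∈ ElevatedSet q (n - i), w = α ++ β} \
    {w | ∃ α ∈ ElevatedSet q (n / 2), ∃ β ∈ ElevatedSet q (n / 2), w = α ++ β}

/-- The set B_q(n). -/
def SetB (q n : ℕ) : Set (List ℕ) :=
  {w | ∃ i ≤ n / 2 - 1, ∃ α ∈ MotzkinSet q i, ∃ β ∈ ElevatedSet q (n - i - 1),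
    w = 1 :: (α ++ β)}

/-- The set C_q(n): words γ0 with γ a (q-2)-colored Motzkin word of length n-1
having no factor which is an elevated Motzkin word of length j ≥ ⌈n/2⌉. -/
def SetC (q n : ℕ) : Set (List ℕ) :=
  {w | ∃ γ ∈ MotzkinSet q (n - 1),
    (∀ j, (n + 1) / 2 ≤ j → ∀ β ∈ ElevatedSet q j, ¬ β <:+: γ) ∧ w = γ ++ [0]}

/-- The cross-bifix-free candidate set CBFS_q(n). -/
def CBFS (q n : ℕ) : Set (List ℕ) := SetA q n ∪ SetB q n ∪ SetC q n

/-- A word is bifix-free if no nonempty proper prefix of it is also a suffix of it. -/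
def BifixFree (w : List ℕ) : Prop :=
  ∀ u, u <+: w → u ≠ [] → u.length < w.length → ¬ u <:+ w

/-- BF_q(n): the set of bifix-free words of length n over Z_q. -/
def BF (q n : ℕ) : Set (List ℕ) := {w | w.length = n ∧ (∀ a ∈ w, a < q) ∧ BifixFree w}

/-- F_{k,q}(n): the number of words of length n over Z_q avoiding k consecutive 0's. -/
noncomputable def Fcount (k q n : ℕ) : ℕ :=
  {w : List ℕ | w.length = n ∧ (∀ a ∈ w, a < q) ∧ ¬ List.replicate k 0 <:+: w}.ncard

/-- The set S_{k,q}(n) of Bajic--Stojanovic--Chee--Kiah type words: words s of length n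
over Z_q with s₁ = ⋯ = s_k = 0, s_{k+1} ≠ 0, s_n ≠ 0, and such that the subword
s_{k+2} ⋯ s_{n-1} contains no k consecutive 0's. -/
def SetS (q k n : ℕ) : Set (List ℕ) :=
  {s | s.length = n ∧ (∀ a ∈ s, a < q) ∧ s.take k = List.replicate k 0 ∧
    s.getD k 0 ≠ 0 ∧ s.getLast? ≠ some 0 ∧
    ¬ List.replicate k 0 <:+: (s.drop (k + 1)).take (n - k - 2)}

/-
A word of `B_q(n)` is `1αβ` with `α` Motzkin and `β = 1γ0` elevated. Both `α` and `β` have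
all prefix value-sums nonnegative (for `β`: a proper prefix is `1` followed by a prefix of the
Motzkin word `γ`, and `β` itself has value-sum `0`), and `vsum α = 0`, so every prefix of `αβ`
has nonnegative value-sum. The leading `1` makes every nonempty prefix of `1αβ` strictly
positive, and the value-sum of a word is `|u|₁ - |u|₀`.
-/

@[simp] lemma vsum_nil : vsum [] = 0 := rfl

@[simp] lemma vsum_cons (a : ℕ) (w : List ℕ) : vsum (a :: w) = mval a + vsum w := by
  simp [vsum]

lemma vsum_append (a b : List ℕ) : vsum (a ++ b) = vsum a + vsum b := by
  simp [vsum]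

lemma vsum_eq_count_sub_count (u : List ℕ) : vsum u = (u.count 1 : ℤ) - u.count 0 := by
  induction u with
  | nil => simp
  | cons a t ih =>
    rw [vsum_cons, ih, mval, List.count_cons, List.count_cons]
    by_cases h1 : a = 1 <;> by_cases h0 : a = 0 <;> simp [h1, h0] <;> omega

lemma prefix_or_eq_append_of_prefix_append {u a b : List ℕ} (h : u <+: a ++ b) :
    u <+: a ∨ ∃ v, v <+: b ∧ u = a ++ v := by
  obtain ⟨t, ht⟩ := h
  rcases List.append_eq_append_iff.mp ht with ⟨c, hc, -⟩ | ⟨c, hc, hct⟩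
  · exact Or.inl ⟨c, hc.symm⟩
  · exact Or.inr ⟨c, ⟨t, hct.symm⟩, hc⟩

def PrefixNonneg (w : List ℕ) : Prop := ∀ u, u <+: w → 0 ≤ vsum u

lemma IsMotzkinWord.prefixNonneg {q : ℕ} {w : List ℕ} (h : IsMotzkinWord q w) :
    PrefixNonneg w :=
  h.2.1

namespace PrefixNonneg

lemma append {a b : List ℕ} (ha : PrefixNonneg a) (hb : PrefixNonneg b) (hsum : 0 ≤ vsum a) :
    PrefixNonneg (a ++ b) := by
  intro u hu
  rcases prefix_or_eq_append_of_prefix_append hu with hua | ⟨v, hvb, rfl⟩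
  · exact ha u hua
  · rw [vsum_append]
    linarith [hb v hvb]

lemma vsum_pos_of_prefix_one_cons {w u : List ℕ} (hw : PrefixNonneg w) (hu : u <+: 1 :: w)
    (hne : u ≠ []) : 0 < vsum u := by
  rcases List.prefix_cons_iff.mp hu with rfl | ⟨v, rfl, hv⟩
  · exact absurd rfl hne
  · rw [vsum_cons, mval, if_pos rfl]
    linarith [hw v hv]

lemma one_cons {w : List ℕ} (hw : PrefixNonneg w) : PrefixNonneg (1 :: w) := by
  intro u hu
  rcases eq_or_ne u [] with rfl | hne
  · exact le_rfl
  · exact (hw.vsum_pos_of_prefix_one_cons hu hne).le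

lemma concat {w : List ℕ} {a : ℕ} (hw : PrefixNonneg w) (hsum : 0 ≤ vsum (w ++ [a])) :
    PrefixNonneg (w ++ [a]) := by
  intro u hu
  rcases List.prefix_concat_iff.mp hu with rfl | hu
  · exact hsum
  · exact hw u hu

end PrefixNonneg

lemma prefixNonneg_of_mem_elevatedSet {q m : ℕ} {β : List ℕ} (hβ : β ∈ ElevatedSet q m) :
    PrefixNonneg β := by
  obtain ⟨-, γ, ⟨-, hγ⟩, rfl⟩ := hβ
  have hsum : vsum (1 :: (γ ++ [0])) = 0 := by
    simp [vsum_append, hγ.2.2, mval]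
  rw [← List.cons_append] at hsum ⊢
  exact hγ.prefixNonneg.one_cons.concat hsum.ge

theorem setB_prefix_counts_general (q n : ℕ)
    (w : List ℕ) (hw : w ∈ SetB q n) :
    ∀ u, u <+: w → u ≠ [] → u.count 0 < u.count 1 := by
  obtain ⟨_, -, α, ⟨-, hα⟩, β, hβ, rfl⟩ := hw
  intro u hu hne
  have htail : PrefixNonneg (α ++ β) :=
    hα.prefixNonneg.append (prefixNonneg_of_mem_elevatedSet hβ) hα.2.2.ge
  have hpos := htail.vsum_pos_of_prefix_one_cons hu hne
  rw [vsum_eq_count_sub_count] at hpos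
  omega

/-- For w ∈ B_q(n), every nonempty prefix u of w satisfies |u|₀ < |u|₁. -/
theorem setB_prefix_counts (q n : ℕ) (hq : 3 ≤ q) (hn : 3 ≤ n)
    (w : List ℕ) (hw : w ∈ SetB q n) :
    ∀ u, u <+: w → u ≠ [] → u.count 0 < u.count 1 :=
  setB_prefix_counts_general q n w hw
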